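/- Let G be a totally disconnected locally compact group, φ : G → G a topological automorphism, and N a closed normal subgroup with φ(N) = N. Then for every open compact subgroup U of G, C(φ|_N, U ∩ N) = C(φ,U) ∩ N, and h_top(φ) ≥ h_top(φ|_N). -/

import Mathlib

open Filter Topology

variable {G : Type*} [Group G]

/-- The `n`-th `φ`-cotrajectory `Cₙ(φ,U) = ⋂_{i<n} φ^{-i}(U)`. -/
def cotrajN (φ : MulAut G) (U : Subgroup G) (n : ℕ) : Subgroup G :=
  ⨅ i ∈ Finset.range n, Subgroup.comap (φ ^ i).toMonoidHom U

/-- `cₙ = [U : Cₙ(φ,U)]`. -/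
noncomputable def entIdx (φ : MulAut G) (U : Subgroup G) (n : ℕ) : ℕ :=
  (cotrajN φ U n).relIndex U

/-- The topological entropy of `φ` with respect to `U`,
`H_top(φ,U) = lim_n log cₙ / n` (the limit exists, so it equals the `limsup`). -/
noncomputable def Htop (φ : MulAut G) (U : Subgroup G) : ℝ :=
  limsup (fun n : ℕ => Real.log (entIdx φ U n) / n) atTop

/-- The `φ`-cotrajectory `C(φ,U) = ⋂_{n≥0} φ^{-n}(U)`. -/
def cotraj (φ : MulAut G) (U : Subgroup G) : Subgroup G :=
  ⨅ n : ℕ, Subgroup.comap (φ ^ n).toMonoidHom U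

/-- The topological entropy `h_top(φ) = sup {H_top(φ,U) : U open compact subgroup}`. -/
noncomputable def htop [TopologicalSpace G] (φ : MulAut G) : EReal :=
  ⨆ (U : Subgroup G) (_ : IsOpen (U : Set G) ∧ IsCompact (U : Set G)), ((Htop φ U : ℝ) : EReal)

/-!
Since `φN` agrees with `φ` on `N`, the cotrajectories of `φN` are the traces on `N` of those
of `φ`. Given an open compact subgroup `W` of `N`, van Dantzig's theorem yields an open compact
subgroup `U` of `G` with `U ∩ N ≤ W`, and then
`[W : Cₙ(φN, W)] ≤ [W : U ∩ N] · [U ∩ N : Cₙ(φ, U) ∩ N] ≤ [W : U ∩ N] · [U : Cₙ(φ, U)]`.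
The constant factor disappears in `log(·) / n`, and `[U : Cₙ(φ, U)] ≤ [U : U ∩ φ⁻¹U]ⁿ` keeps
the real sequences bounded, so that their `limsup`s can be compared.
-/

section Cotrajectory

variable (φ : MulAut G) (U : Subgroup G)

lemma mem_cotrajN {n : ℕ} {x : G} : x ∈ cotrajN φ U n ↔ ∀ i < n, (φ ^ i) x ∈ U := by
  simp [cotrajN, Subgroup.mem_iInf]

lemma mem_cotraj {x : G} : x ∈ cotraj φ U ↔ ∀ i, (φ ^ i) x ∈ U := by
  simp [cotraj, Subgroup.mem_iInf]

lemma cotrajN_zero : cotrajN φ U 0 = ⊤ := by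
  ext; simp [mem_cotrajN]

lemma cotrajN_one : cotrajN φ U 1 = U := by
  ext; simp [mem_cotrajN]

lemma cotrajN_succ (n : ℕ) :
    cotrajN φ U (n + 1) = cotrajN φ U n ⊓ U.comap (φ ^ n).toMonoidHom := by
  ext x
  simp only [mem_cotrajN, Subgroup.mem_inf, Subgroup.mem_comap, Nat.lt_succ_iff_lt_or_eq,
    or_imp, forall_and, forall_eq]
  rfl

lemma cotrajN_le_comap {i n : ℕ} (hi : i < n) :
    cotrajN φ U n ≤ U.comap (φ ^ i).toMonoidHom :=
  fun _ hx ↦ (mem_cotrajN φ U).1 hx i hi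

lemma cotrajN_le {n : ℕ} (hn : n ≠ 0) : cotrajN φ U n ≤ U :=
  fun x hx ↦ by simpa using (mem_cotrajN φ U).1 hx 0 (Nat.pos_of_ne_zero hn)

variable {U} in
lemma cotrajN_mono {V : Subgroup G} (hVU : V ≤ U) (n : ℕ) : cotrajN φ V n ≤ cotrajN φ U n :=
  fun _ hx ↦ (mem_cotrajN φ U).2 fun i hi ↦ hVU ((mem_cotrajN φ V).1 hx i hi)

lemma entIdx_zero : entIdx φ U 0 = 1 := by
  rw [entIdx, cotrajN_zero, Subgroup.relIndex_top_left]

lemma entIdx_one : entIdx φ U 1 = 1 := by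
  rw [entIdx, cotrajN_one, Subgroup.relIndex_self]

lemma entIdx_succ {n : ℕ} (hn : n ≠ 0) :
    entIdx φ U (n + 1) =
      (U.comap (φ ^ n).toMonoidHom).relIndex (cotrajN φ U n) * entIdx φ U n := by
  have tower := Subgroup.relIndex_inf_mul_relIndex (U.comap (φ ^ n).toMonoidHom) (cotrajN φ U n) U
  rw [inf_eq_left.2 (cotrajN_le φ U hn)] at tower
  rw [entIdx, entIdx, tower, cotrajN_succ, inf_comm]

lemma relIndex_comap_pow_succ_comap_pow (n : ℕ) :
    (U.comap (φ ^ (n + 1)).toMonoidHom).relIndex (U.comap (φ ^ n).toMonoidHom) =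
      (U.comap φ.toMonoidHom).relIndex U := by
  have : U.comap (φ ^ (n + 1)).toMonoidHom =
      (U.comap φ.toMonoidHom).comap (φ ^ n).toMonoidHom := by
    rw [Subgroup.comap_comap, pow_succ']
    rfl
  rw [this, Subgroup.relIndex_comap, Subgroup.map_comap_eq_self_of_surjective (φ ^ n).surjective]

lemma entIdx_succ_le (hU : (U.comap φ.toMonoidHom).relIndex U ≠ 0) (n : ℕ) :
    entIdx φ U (n + 1) ≤ (U.comap φ.toMonoidHom).relIndex U * entIdx φ U n := by
  match n with
  | 0 => simpa [entIdx_zero, entIdx_one] using Nat.one_le_iff_ne_zero.2 hU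
  | n + 1 =>
    rw [entIdx_succ φ U n.succ_ne_zero]
    gcongr
    rw [← relIndex_comap_pow_succ_comap_pow φ U n] at hU ⊢
    exact Subgroup.relIndex_le_of_le_right (cotrajN_le_comap φ U n.lt_succ_self) hU

lemma entIdx_le_pow (hU : (U.comap φ.toMonoidHom).relIndex U ≠ 0) (n : ℕ) :
    entIdx φ U n ≤ (U.comap φ.toMonoidHom).relIndex U ^ n := by
  induction n with
  | zero => rw [entIdx_zero, pow_zero]
  | succ n ih => exact (entIdx_succ_le φ U hU n).trans (by rw [pow_succ']; gcongr)

variable {U} in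
lemma entIdx_le_mul_relIndex {V : Subgroup G} (hVU : V ≤ U) {n : ℕ} (hV : entIdx φ V n ≠ 0)
    (hV' : V.relIndex U ≠ 0) : entIdx φ U n ≤ entIdx φ V n * V.relIndex U := by
  have key : entIdx φ V n * V.relIndex U = (cotrajN φ V n ⊓ V).relIndex U := by
    rw [entIdx, ← Subgroup.relIndex_inf_mul_relIndex, inf_eq_left.2 hVU]
  rw [key]
  refine Subgroup.relIndex_le_of_le_left ?_ (key ▸ mul_ne_zero hV hV')
  exact inf_le_left.trans (cotrajN_mono φ hVU n)

end Cotrajectory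

section Restriction

variable {N : Subgroup G} {φ : MulAut G} {φN : MulAut N}

lemma coe_pow_apply_of_restrict (hres : ∀ x : N, (φN x : G) = φ x) (i : ℕ) (x : N) :
    ((φN ^ i) x : G) = (φ ^ i) x := by
  induction i generalizing x with
  | zero => rfl
  | succ i ih => rw [pow_succ, pow_succ, MulAut.mul_apply, MulAut.mul_apply, ih, hres]

lemma cotrajN_subgroupOf (hres : ∀ x : N, (φN x : G) = φ x) (U : Subgroup G) (n : ℕ) :
    cotrajN φN (U.subgroupOf N) n = (cotrajN φ U n).subgroupOf N := by
  ext x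
  simp only [Subgroup.mem_subgroupOf, mem_cotrajN, coe_pow_apply_of_restrict hres]

lemma cotraj_subgroupOf (hres : ∀ x : N, (φN x : G) = φ x) (U : Subgroup G) :
    cotraj φN (U.subgroupOf N) = (cotraj φ U).subgroupOf N := by
  ext x
  simp only [Subgroup.mem_subgroupOf, mem_cotraj, coe_pow_apply_of_restrict hres]

lemma Subgroup.relIndex_subgroupOf_le {H K : Subgroup G} (N : Subgroup G) (h : H.relIndex K ≠ 0) :
    (H.subgroupOf N).relIndex (K.subgroupOf N) ≤ H.relIndex K := by
  rw [Subgroup.subgroupOf, Subgroup.relIndex_comap, Subgroup.subgroupOf_map_subtype]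
  exact Subgroup.relIndex_le_of_le_right inf_le_left h

lemma entIdx_subgroupOf_ne_zero (hres : ∀ x : N, (φN x : G) = φ x) {U : Subgroup G} {n : ℕ}
    (h : entIdx φ U n ≠ 0) : entIdx φN (U.subgroupOf N) n ≠ 0 := by
  rw [entIdx, cotrajN_subgroupOf hres]
  exact Subgroup.relIndex_comap_ne_zero _ h

lemma entIdx_subgroupOf_le (hres : ∀ x : N, (φN x : G) = φ x) {U : Subgroup G} {n : ℕ}
    (h : entIdx φ U n ≠ 0) : entIdx φN (U.subgroupOf N) n ≤ entIdx φ U n := by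
  rw [entIdx, cotrajN_subgroupOf hres]
  exact Subgroup.relIndex_subgroupOf_le N h

end Restriction

lemma log_natCast_le_log_natCast {m n : ℕ} (h : m ≤ n) : Real.log m ≤ Real.log n := by
  rcases m.eq_zero_or_pos with rfl | hm
  · simpa using Real.log_natCast_nonneg n
  · exact Real.log_le_log (by exact_mod_cast hm) (by exact_mod_cast h)

lemma isBoundedUnder_log_div_of_le_pow {b : ℕ → ℕ} {k : ℕ} (hb : ∀ n, b n ≤ k ^ n) :
    IsBoundedUnder (· ≤ ·) atTop fun n : ℕ ↦ Real.log (b n) / n := by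
  refine isBoundedUnder_of ⟨Real.log k, fun n ↦ ?_⟩
  refine div_le_of_le_mul₀ n.cast_nonneg (Real.log_natCast_nonneg k) ?_
  calc Real.log (b n) ≤ Real.log (k ^ n : ℕ) := log_natCast_le_log_natCast (hb n)
    _ = Real.log k * n := by rw [Nat.cast_pow, Real.log_pow, mul_comm]

lemma limsup_log_div_le_of_le_mul {a b : ℕ → ℕ} {K : ℕ} (hab : ∀ n, a n ≤ b n * K)
    (hb : IsBoundedUnder (· ≤ ·) atTop fun n : ℕ ↦ Real.log (b n) / n) :
    limsup (fun n : ℕ ↦ Real.log (a n) / n) atTop ≤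
      limsup (fun n : ℕ ↦ Real.log (b n) / n) atTop := by
  set g := fun n : ℕ ↦ Real.log (b n) / n
  set r := fun n : ℕ ↦ Real.log K / n
  have hr : Tendsto r atTop (𝓝 0) := tendsto_const_div_atTop_nhds_zero_nat _
  have hlog n : Real.log (a n) ≤ Real.log (b n) + Real.log K := by
    rcases eq_or_ne (b n * K) 0 with h0 | h0
    · have ha : a n = 0 := Nat.eq_zero_of_le_zero (h0 ▸ hab n)
      rw [ha, Nat.cast_zero, Real.log_zero]
      positivity
    · rw [← Real.log_mul (by simp_all) (by simp_all), ← Nat.cast_mul]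
      exact log_natCast_le_log_natCast (hab n)
  have hfgr n : Real.log (a n) / n ≤ (g + r) n := by
    rw [Pi.add_apply, ← add_div]
    gcongr
    exact hlog n
  calc limsup (fun n : ℕ ↦ Real.log (a n) / n) atTop ≤ limsup (g + r) atTop :=
        limsup_le_limsup (Eventually.of_forall hfgr)
          (isCoboundedUnder_le_of_le atTop (x := 0) fun n ↦ by positivity)
          (isBoundedUnder_le_add hb hr.isBoundedUnder_le)
    _ ≤ limsup g atTop + limsup r atTop :=
        limsup_add_le (isBoundedUnder_of ⟨0, fun n ↦ by positivity⟩) hb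
          hr.isCoboundedUnder_le hr.isBoundedUnder_le
    _ = limsup g atTop := by rw [hr.limsup_eq, add_zero]

lemma exists_isOpen_isCompact_subset {X : Type*} [TopologicalSpace X] [LocallyCompactSpace X]
    [T2Space X] [TotallyDisconnectedSpace X] {O : Set X} (hO : IsOpen O) {x : X} (hx : x ∈ O) :
    ∃ W, IsOpen W ∧ IsCompact W ∧ x ∈ W ∧ W ⊆ O := by
  obtain ⟨s, hs, hxs, hsO⟩ := exists_compact_subset hO hx
  obtain ⟨W, hW, hxW, hWs⟩ :=
    loc_compact_Haus_tot_disc_of_zero_dim.mem_nhds_iff.1 (isOpen_interior.mem_nhds hxs)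
  exact ⟨W, hW.isOpen, hs.of_isClosed_subset hW.isClosed (hWs.trans interior_subset), hxW,
    hWs.trans (interior_subset.trans hsO)⟩

section Topology

variable [TopologicalSpace G]

lemma continuous_mulAut_pow {φ : MulAut G} (hφ : Continuous φ) (n : ℕ) :
    Continuous ⇑(φ ^ n) := by
  induction n with
  | zero => exact continuous_id
  | succ n ih => rw [pow_succ']; exact hφ.comp ih

lemma isOpen_cotrajN {φ : MulAut G} (hφ : Continuous φ) {U : Subgroup G}
    (hU : IsOpen (U : Set G)) (n : ℕ) : IsOpen (cotrajN φ U n : Set G) := by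
  induction n with
  | zero => rw [cotrajN_zero]; exact isOpen_univ
  | succ n ih =>
    rw [cotrajN_succ, Subgroup.coe_inf]
    exact ih.inter (hU.preimage (continuous_mulAut_pow hφ n))

variable [IsTopologicalGroup G]

lemma Subgroup.relIndex_ne_zero_of_isOpen_of_isCompact {V U : Subgroup G}
    (hV : IsOpen (V : Set G)) (hU : IsCompact (U : Set G)) : V.relIndex U ≠ 0 := by
  have : CompactSpace U := isCompact_iff_compactSpace.1 hU
  have := Subgroup.quotient_finite_of_isOpen (V.subgroupOf U) (hV.preimage continuous_subtype_val)
  exact Subgroup.index_ne_zero_of_finite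

lemma exists_isOpen_subgroup_subset {W : Set G} (hWc : IsCompact W) (hWo : IsOpen W)
    (h1 : (1 : G) ∈ W) : ∃ U : Subgroup G, IsOpen (U : Set G) ∧ (U : Set G) ⊆ W := by
  obtain ⟨V, hV, hWV⟩ := compact_open_separated_mul_right hWc hWo subset_rfl
  have hWS : ∀ x ∈ Subgroup.closure (V ∩ V⁻¹), ∀ w ∈ W, w * x ∈ W := by
    intro x hx
    induction hx using Subgroup.closure_induction'' with
    | mem x hx => exact fun w hw ↦ hWV (Set.mul_mem_mul hw hx.1)
    | inv_mem x hx => exact fun w hw ↦ hWV (Set.mul_mem_mul hw hx.2)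
    | one => simp
    | mul x y _ _ hx hy => exact fun w hw ↦ mul_assoc w x y ▸ hy _ (hx w hw)
  refine ⟨Subgroup.closure (V ∩ V⁻¹), Subgroup.isOpen_of_mem_nhds _ (g := 1) ?_,
    fun x hx ↦ by simpa using hWS x hx 1 h1⟩
  exact Filter.mem_of_superset (inter_mem hV (inv_mem_nhds_one G hV)) Subgroup.subset_closure

lemma exists_isOpen_isCompact_subgroup_subset [LocallyCompactSpace G]
    [TotallyDisconnectedSpace G] {O : Set G} (hO : IsOpen O) (h1 : (1 : G) ∈ O) :
    ∃ U : Subgroup G, IsOpen (U : Set G) ∧ IsCompact (U : Set G) ∧ (U : Set G) ⊆ O := by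
  obtain ⟨W, hWo, hWc, h1W, hWO⟩ := exists_isOpen_isCompact_subset hO h1
  obtain ⟨U, hUo, hUW⟩ := exists_isOpen_subgroup_subset hWc hWo h1W
  exact ⟨U, hUo, hWc.of_isClosed_subset (U.isClosed_of_isOpen hUo) hUW, hUW.trans hWO⟩

lemma exists_isOpen_isCompact_subgroupOf_le [LocallyCompactSpace G]
    [TotallyDisconnectedSpace G] {N : Subgroup G} {W : Subgroup N} (hW : IsOpen (W : Set N)) :
    ∃ U : Subgroup G, IsOpen (U : Set G) ∧ IsCompact (U : Set G) ∧ U.subgroupOf N ≤ W := by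
  obtain ⟨O, hO, hOW⟩ := isOpen_induced_iff.1 hW
  have h1O : (1 : G) ∈ O := by
    have := W.one_mem
    rwa [← SetLike.mem_coe, ← hOW] at this
  obtain ⟨U, hUo, hUc, hUO⟩ := exists_isOpen_isCompact_subgroup_subset hO h1O
  refine ⟨U, hUo, hUc, fun x hx ↦ ?_⟩
  rw [← SetLike.mem_coe, ← hOW]
  exact hUO (Subgroup.mem_subgroupOf.1 hx)

variable {φ : MulAut G}

lemma entIdx_ne_zero (hφ : Continuous φ) {U : Subgroup G} (hUo : IsOpen (U : Set G))
    (hUc : IsCompact (U : Set G)) (n : ℕ) : entIdx φ U n ≠ 0 :=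
  Subgroup.relIndex_ne_zero_of_isOpen_of_isCompact (isOpen_cotrajN hφ hUo n) hUc

lemma isBoundedUnder_log_entIdx_div (hφ : Continuous φ) {U : Subgroup G}
    (hUo : IsOpen (U : Set G)) (hUc : IsCompact (U : Set G)) :
    IsBoundedUnder (· ≤ ·) atTop fun n : ℕ ↦ Real.log (entIdx φ U n) / n :=
  isBoundedUnder_log_div_of_le_pow <| entIdx_le_pow φ U <|
    Subgroup.relIndex_ne_zero_of_isOpen_of_isCompact (hUo.preimage hφ) hUc

lemma exists_Htop_restrict_le [LocallyCompactSpace G] [TotallyDisconnectedSpace G]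
    (hφ : Continuous φ) {N : Subgroup G} {φN : MulAut N} (hres : ∀ x : N, (φN x : G) = φ x)
    {W : Subgroup N} (hWo : IsOpen (W : Set N)) (hWc : IsCompact (W : Set N)) :
    ∃ U : Subgroup G, IsOpen (U : Set G) ∧ IsCompact (U : Set G) ∧ Htop φN W ≤ Htop φ U := by
  obtain ⟨U, hUo, hUc, hUW⟩ := exists_isOpen_isCompact_subgroupOf_le hWo
  have hU n : entIdx φ U n ≠ 0 := entIdx_ne_zero hφ hUo hUc n
  have hUN : (U.subgroupOf N).relIndex W ≠ 0 :=
    Subgroup.relIndex_ne_zero_of_isOpen_of_isCompact (hUo.preimage continuous_subtype_val) hWc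
  refine ⟨U, hUo, hUc, limsup_log_div_le_of_le_mul (K := (U.subgroupOf N).relIndex W)
    (fun n ↦ ?_) (isBoundedUnder_log_entIdx_div hφ hUo hUc)⟩
  calc entIdx φN W n ≤ entIdx φN (U.subgroupOf N) n * (U.subgroupOf N).relIndex W :=
        entIdx_le_mul_relIndex φN hUW (entIdx_subgroupOf_ne_zero hres (hU n)) hUN
    _ ≤ entIdx φ U n * (U.subgroupOf N).relIndex W := by
        gcongr
        exact entIdx_subgroupOf_le hres (hU n)

end Topology

theorem monotonicity_subgroup_general
    [TopologicalSpace G] [IsTopologicalGroup G] [LocallyCompactSpace G] [TotallyDisconnectedSpace G]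
    (φ : MulAut G) (hφ : Continuous φ)
    (N : Subgroup G)
    (φN : MulAut ↥N) (hres : ∀ x : ↥N, (φN x : G) = φ (x : G)) :
    (∀ U : Subgroup G, IsOpen (U : Set G) → IsCompact (U : Set G) →
        cotraj φN (U.subgroupOf N) = (cotraj φ U).subgroupOf N) ∧
      htop φN ≤ htop φ := by
  refine ⟨fun U _ _ ↦ cotraj_subgroupOf hres U, iSup₂_le fun W ⟨hWo, hWc⟩ ↦ ?_⟩
  obtain ⟨U, hUo, hUc, hWU⟩ := exists_Htop_restrict_le hφ hres hWo hWc
  exact le_iSup₂_of_le U ⟨hUo, hUc⟩ (EReal.coe_le_coe_iff.2 hWU)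

theorem monotonicity_subgroup
    [TopologicalSpace G] [IsTopologicalGroup G] [LocallyCompactSpace G] [TotallyDisconnectedSpace G]
    (φ : MulAut G) (hφ : Continuous φ) (hφ' : Continuous φ⁻¹)
    (N : Subgroup G) [N.Normal] (hNc : IsClosed (N : Set G))
    (hNφ : Subgroup.map φ.toMonoidHom N = N)
    (φN : MulAut ↥N) (hres : ∀ x : ↥N, (φN x : G) = φ (x : G)) :
    (∀ U : Subgroup G, IsOpen (U : Set G) → IsCompact (U : Set G) →
        cotraj φN (U.subgroupOf N) = (cotraj φ U).subgroupOf N) ∧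
      htop φN ≤ htop φ :=
  monotonicity_subgroup_general φ hφ N φN hres
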